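/- Let A be a unital C*-algebra, let θ, γ, r ∈ ℝ, let d ∈ ℤ with d ≠ 0, and let u, v ∈ A be unitaries satisfying v u = e^{2πiθ} u v. Let f : ℂ → ℝ be continuous, and for a continuous function φ : ℂ → ℝ write exp(2πi φ(u)) for the unitary obtained by applying the continuous functional calculus of the normal element u to the function z ↦ e^{2πi φ(z)}. Define g : ℂ → ℝ by g(z) = f(e^{2πir/d} z) + r. Suppose β, α, α' are unital *-homomorphisms from A to A with β(u) = e^{2πir/d} u, β(v) = v, α(u) = e^{2πiγ} u, α(v) = exp(2πi f(u)) u^d v, α'(u) = e^{2πiγ} u, and α'(v) = exp(2πi g(u)) u^d v. Then β(α(u)) = α'(β(u)) and β(α(v)) = α'(β(v)); in particular, β(exp(2πi f(u)) u^d v) = exp(2πi g(u)) u^d v. -/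

import Mathlib

/-- The complex number `e^{2πit}` for `t : ℝ`. -/
noncomputable def e2πi (t : ℝ) : ℂ :=
  Complex.exp ((2 * Real.pi * t : ℝ) * Complex.I)

lemma e2πi_add (s t : ℝ) : e2πi (s + t) = e2πi s * e2πi t := by
  unfold e2πi; rw [← Complex.exp_add]; congr 1; push_cast; ring

lemma e2πi_zero : e2πi 0 = 1 := by simp [e2πi]

lemma e2πi_star (s : ℝ) : star (e2πi s) = e2πi (-s) := by
  unfold e2πi
  rw [show (star : ℂ → ℂ) = starRingEnd ℂ from rfl, ← Complex.exp_conj]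
  congr 1
  simp [Complex.ext_iff]

lemma e2πi_star_mul_self (s : ℝ) : star (e2πi s) * e2πi s = 1 := by
  rw [e2πi_star, ← e2πi_add, neg_add_cancel, e2πi_zero]

lemma e2πi_zpow (s : ℝ) (n : ℤ) : e2πi s ^ n = e2πi (n * s) := by
  unfold e2πi; rw [← Complex.exp_int_mul]; congr 1; push_cast; ring

lemma e2πi_continuous {f : ℂ → ℝ} (hf : Continuous f) :
    Continuous fun z : ℂ => e2πi (f z) := by
  unfold e2πi
  exact Complex.continuous_exp.comp <| by fun_prop

lemma map_unitary_zpow_aux {A : Type*} [CStarAlgebra A] (β : A →⋆ₐ[ℂ] A) (c : ℂ)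
    (hc : star c * c = 1) (w : unitary A) (h : β (w : A) = c • (w : A)) (n : ℤ) :
    β ((w ^ n : unitary A) : A) = c ^ n • ((w ^ n : unitary A) : A) := by
  have hpow : ∀ m : ℕ, β ((w ^ m : unitary A) : A) = c ^ m • ((w ^ m : unitary A) : A) := by
    intro m
    rw [SubmonoidClass.coe_pow, map_pow, h, smul_pow, ← SubmonoidClass.coe_pow]
  obtain (m | m) := n
  · simpa [zpow_natCast] using hpow m
  · have hinv : star c = c⁻¹ := eq_inv_of_mul_eq_one_left hc
    have h1 : ((w ^ Int.negSucc m : unitary A) : A) = star ((w ^ (m + 1) : unitary A) : A) := by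
      rw [zpow_negSucc, ← Unitary.star_eq_inv, Unitary.coe_star]
    rw [h1, map_star, hpow, star_smul, star_pow, hinv, zpow_negSucc, inv_pow]

/-- Let `A` be a unital C*-algebra, `θ, γ, r ∈ ℝ`, `d ∈ ℤ` with `d ≠ 0`,
and let `u, v ∈ A` be unitaries with `v u = e^{2πiθ} u v`.  Let `f : ℂ → ℝ` be continuous
and set `g z = f (e^{2πir/d} z) + r`.  Suppose `β, α, α'` are unital *-homomorphisms of `A`
with `β u = e^{2πir/d} u`, `β v = v`, `α u = e^{2πiγ} u`, `α v = exp(2πi f(u)) u^d v`,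
`α' u = e^{2πiγ} u`, `α' v = exp(2πi g(u)) u^d v`.  Then `β (α u) = α' (β u)` and
`β (α v) = α' (β v)`; in particular `β (exp(2πi f(u)) u^d v) = exp(2πi g(u)) u^d v`.
Here `exp(2πi φ(u))` is the continuous functional calculus of the normal element `u`
applied to `z ↦ e^{2πi φ(z)}`. -/
theorem conjugation_intertwines_furstenberg
    {A : Type*} [CStarAlgebra A] (θ γ r : ℝ) (d : ℤ) (hd : d ≠ 0)
    (u v : unitary A)
    (hcomm : (v : A) * (u : A) = e2πi θ • ((u : A) * (v : A)))
    (f : ℂ → ℝ) (hf : Continuous f)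
    (g : ℂ → ℝ) (hg : ∀ z : ℂ, g z = f (e2πi (r / d) * z) + r)
    (β α α' : A →⋆ₐ[ℂ] A)
    (hβu : β (u : A) = e2πi (r / d) • (u : A))
    (hβv : β (v : A) = (v : A))
    (hαu : α (u : A) = e2πi γ • (u : A))
    (hαv : α (v : A) = cfc (fun z : ℂ => e2πi (f z)) (u : A) * ((u ^ d : unitary A) : A) * (v : A))
    (hα'u : α' (u : A) = e2πi γ • (u : A))
    (hα'v : α' (v : A) =
      cfc (fun z : ℂ => e2πi (g z)) (u : A) * ((u ^ d : unitary A) : A) * (v : A)) :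
    β (α (u : A)) = α' (β (u : A)) ∧ β (α (v : A)) = α' (β (v : A)) ∧
      β (cfc (fun z : ℂ => e2πi (f z)) (u : A) * ((u ^ d : unitary A) : A) * (v : A))
        = cfc (fun z : ℂ => e2πi (g z)) (u : A) * ((u ^ d : unitary A) : A) * (v : A) := by
  set c : ℂ := e2πi (r / d) with hc_def
  have hc : star c * c = 1 := e2πi_star_mul_self _
  have hcd : c ^ d = e2πi r := by
    rw [hc_def, e2πi_zpow]
    congr 1
    field_simp
  have hF : Continuous fun z : ℂ => e2πi (f z) := e2πi_continuous hf
  have hF' : Continuous fun z : ℂ => e2πi (f (c * z)) :=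
    e2πi_continuous (hf.comp (continuous_const.mul continuous_id))
  have hβcont : Continuous β := by
    refine AddMonoidHomClass.continuous_of_bound β 1 fun a => ?_
    simpa using NonUnitalStarAlgHom.norm_apply_le β a
  have hNβu : IsStarNormal (β (u : A)) := by
    constructor
    have := (Unitary.coe_isStarNormal u).star_comm_self
    calc star (β (u : A)) * β (u : A) = β (star (u : A) * (u : A)) := by
          rw [map_mul, map_star]
      _ = β ((u : A) * star (u : A)) := by rw [this]
      _ = β (u : A) * star (β (u : A)) := by rw [map_mul, map_star]
  have step1 : β (cfc (fun z : ℂ => e2πi (f z)) (u : A))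
      = cfc (fun z : ℂ => e2πi (f (c * z))) (u : A) := by
    rw [StarAlgHom.map_cfc β _ (u : A) hF.continuousOn hβcont (Unitary.coe_isStarNormal u) hNβu,
      hβu, ← cfc_comp_smul c _ (u : A) hF.continuousOn (Unitary.coe_isStarNormal u)]
    simp only [smul_eq_mul]
  have step2 : cfc (fun z : ℂ => e2πi (g z)) (u : A)
      = e2πi r • cfc (fun z : ℂ => e2πi (f (c * z))) (u : A) := by
    have heq : (fun z : ℂ => e2πi (g z)) = fun z : ℂ => e2πi r * e2πi (f (c * z)) := by
      funext z; rw [hg z, add_comm, e2πi_add]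
    rw [heq, cfc_const_mul _ _ _ hF'.continuousOn]
  have hud : β ((u ^ d : unitary A) : A) = e2πi r • ((u ^ d : unitary A) : A) := by
    rw [map_unitary_zpow_aux β c hc u hβu d, hcd]
  have hmain : β (cfc (fun z : ℂ => e2πi (f z)) (u : A) * ((u ^ d : unitary A) : A) * (v : A))
      = cfc (fun z : ℂ => e2πi (g z)) (u : A) * ((u ^ d : unitary A) : A) * (v : A) := by
    rw [map_mul, map_mul, step1, hud, hβv, step2, mul_smul_comm, smul_mul_assoc,
      smul_mul_assoc, smul_mul_assoc]
  refine ⟨?_, ?_, hmain⟩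
  · rw [hαu, map_smul, hβu, map_smul, hα'u, smul_comm]
  · rw [hαv, hβv, hα'v]
    exact hmain
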